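/- Invariance of C_ub and C_rub: let t > 0. If v : ℝ^d → ℂ is bounded and uniformly continuous, then T(t)v is bounded and uniformly continuous. If in addition lim_{τ→0} sup_{x∈ℝ^d} |v(e^{τS}x) − v(x)| = 0, then also lim_{τ→0} sup_{x∈ℝ^d} |[T(t)v](e^{τS}x) − [T(t)v](x)| = 0; more precisely, sup_{x∈ℝ^d} |[T(t)v](e^{τS}x) − [T(t)v](x)| ≤ a₁^{d/2} e^{−b₀ t} · sup_{x∈ℝ^d} |v(e^{τS}x) − v(x)| for every τ ∈ ℝ. -/

import Mathlib

open MeasureTheory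

/-- Rotation `e^{tS}x` given by the matrix exponential. -/
noncomputable def ouRot (d : ℕ) (S : Matrix (Fin d) (Fin d) ℝ) (t : ℝ)
    (x : EuclideanSpace ℝ (Fin d)) : EuclideanSpace ℝ (Fin d) :=
  WithLp.toLp 2 (Matrix.mulVec (NormedSpace.exp (t • S)) x)

/-- The scalar complex Ornstein--Uhlenbeck kernel. -/
noncomputable def ouH (d : ℕ) (α δ : ℂ) (S : Matrix (Fin d) (Fin d) ℝ)
    (x ξ : EuclideanSpace ℝ (Fin d)) (t : ℝ) : ℂ :=
  (4 * (Real.pi : ℂ) * α * t) ^ (-(d : ℂ) / 2) *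
    Complex.exp (-(δ * t) - ((‖ouRot d S t x - ξ‖ ^ 2 : ℝ) : ℂ) / (4 * α * t))

/-- The Ornstein--Uhlenbeck semigroup for `t > 0`. -/
noncomputable def ouT (d : ℕ) (α δ : ℂ) (S : Matrix (Fin d) (Fin d) ℝ) (t : ℝ)
    (v : EuclideanSpace ℝ (Fin d) → ℂ) (x : EuclideanSpace ℝ (Fin d)) : ℂ :=
  ∫ ξ : EuclideanSpace ℝ (Fin d), ouH d α δ S x ξ t * v ξ

/-!
Substituting `ξ = e^{tS}x - η` writes `T(t)v(x) = ∫ G(η) v(e^{tS}x - η) dη` with the radial complex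
Gaussian `G = ouGaussian`, and `∫ |G| = a₁^{d/2} e^{-b₀t}`. Hence every difference of two values of
`T(t)v` is an average against `G` of differences of values of `v`, bounded by `∫ |G|` times their
supremum. For the rotation estimate, `e^{τS}` is orthogonal because `S` is skew, so it preserves
both `G` and Lebesgue measure, and `T(t)v(e^{τS}x)` is the same average taken of `v ∘ e^{τS}`.
-/

open scoped Matrix

section Gaussian

variable {V : Type*} [NormedAddCommGroup V] [InnerProductSpace ℝ V] [FiniteDimensional ℝ V]
  [MeasurableSpace V] [BorelSpace V] {b : ℂ}

lemma integrable_cexp_neg_mul_sq_norm (hb : 0 < b.re) :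
    Integrable (fun v : V => Complex.exp (-b * ‖v‖ ^ 2)) := by
  simpa using GaussianFourier.integrable_cexp_neg_mul_sq_norm_add hb 0 (0 : V)

lemma integral_norm_cexp_neg_mul_sq_norm (hb : 0 < b.re) :
    ∫ v : V, ‖Complex.exp (-b * ‖v‖ ^ 2)‖ =
      (Real.pi / b.re) ^ (Module.finrank ℝ V / 2 : ℝ) := by
  have h (v : V) : ‖Complex.exp (-b * ‖v‖ ^ 2)‖ = Real.exp (-b.re * ‖v‖ ^ 2) := by
    rw [Complex.norm_exp, ← Complex.ofReal_pow, neg_mul, Complex.neg_re, Complex.re_mul_ofReal,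
      neg_mul]
  simp_rw [h]
  exact GaussianFourier.integral_rexp_neg_mul_sq_norm hb

end Gaussian

section Rotation

variable {d : ℕ} {S : Matrix (Fin d) (Fin d) ℝ}

lemma exp_add_smul (S : Matrix (Fin d) (Fin d) ℝ) (a b : ℝ) :
    NormedSpace.exp ((a + b) • S) = NormedSpace.exp (a • S) * NormedSpace.exp (b • S) := by
  rw [add_smul]
  exact Matrix.exp_add_of_commute _ _ (((Commute.refl S).smul_left a).smul_right b)

lemma ouRot_ouRot (a b : ℝ) (x : EuclideanSpace ℝ (Fin d)) :
    ouRot d S a (ouRot d S b x) = ouRot d S (a + b) x := by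
  simp only [ouRot, WithLp.ofLp_toLp, Matrix.mulVec_mulVec, exp_add_smul]

lemma ouRot_zero (x : EuclideanSpace ℝ (Fin d)) : ouRot d S 0 x = x := by
  simp [ouRot]

lemma transpose_exp_smul_mul_self (hS : Sᵀ = -S) (τ : ℝ) :
    (NormedSpace.exp (τ • S))ᵀ * NormedSpace.exp (τ • S) = 1 := by
  rw [← Matrix.exp_transpose, Matrix.transpose_smul, hS, smul_neg, ← neg_smul, ← exp_add_smul,
    neg_add_cancel, zero_smul, NormedSpace.exp_zero]

lemma norm_ouRot (hS : Sᵀ = -S) (τ : ℝ) (x : EuclideanSpace ℝ (Fin d)) :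
    ‖ouRot d S τ x‖ = ‖x‖ := by
  rw [← sq_eq_sq₀ (norm_nonneg _) (norm_nonneg _), ← real_inner_self_eq_norm_sq,
    ← real_inner_self_eq_norm_sq, EuclideanSpace.inner_eq_star_dotProduct,
    EuclideanSpace.inner_eq_star_dotProduct]
  simp only [ouRot, WithLp.ofLp_toLp, star_trivial]
  rw [Matrix.dotProduct_mulVec, ← Matrix.mulVec_transpose, Matrix.mulVec_mulVec,
    transpose_exp_smul_mul_self hS, Matrix.one_mulVec]

noncomputable def ouRotEquiv (hS : Sᵀ = -S) (τ : ℝ) :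
    EuclideanSpace ℝ (Fin d) ≃ₗᵢ[ℝ] EuclideanSpace ℝ (Fin d) where
  toFun := ouRot d S τ
  invFun := ouRot d S (-τ)
  map_add' x y := by simp [ouRot, Matrix.mulVec_add]
  map_smul' c x := by simp [ouRot, Matrix.mulVec_smul]
  left_inv x := by simp only [ouRot_ouRot, neg_add_cancel, ouRot_zero]
  right_inv x := by simp only [ouRot_ouRot, add_neg_cancel, ouRot_zero]
  norm_map' := norm_ouRot hS τ

@[simp]
lemma coe_ouRotEquiv (hS : Sᵀ = -S) (τ : ℝ) : ⇑(ouRotEquiv hS τ) = ouRot d S τ := rfl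

end Rotation

section Kernel

variable {d : ℕ} {α : ℂ} {t : ℝ}

noncomputable def ouGaussian (d : ℕ) (α δ : ℂ) (t : ℝ) (η : EuclideanSpace ℝ (Fin d)) : ℂ :=
  (4 * (Real.pi : ℂ) * α * t) ^ (-(d : ℂ) / 2) *
    Complex.exp (-(δ * t) - ((‖η‖ ^ 2 : ℝ) : ℂ) / (4 * α * t))

lemma ouH_eq_ouGaussian (α δ : ℂ) (S : Matrix (Fin d) (Fin d) ℝ)
    (x ξ : EuclideanSpace ℝ (Fin d)) (t : ℝ) :
    ouH d α δ S x ξ t = ouGaussian d α δ t (ouRot d S t x - ξ) := rfl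

lemma ouGaussian_map_linearIsometryEquiv (α δ : ℂ) (t : ℝ)
    (e : EuclideanSpace ℝ (Fin d) ≃ₗᵢ[ℝ] EuclideanSpace ℝ (Fin d)) (η : EuclideanSpace ℝ (Fin d)) :
    ouGaussian d α δ t (e η) = ouGaussian d α δ t η := by
  rw [ouGaussian, e.norm_map, ouGaussian]

lemma ouGaussian_eq_mul_cexp (α δ : ℂ) (t : ℝ) (η : EuclideanSpace ℝ (Fin d)) :
    ouGaussian d α δ t η = (4 * (Real.pi : ℂ) * α * t) ^ (-(d : ℂ) / 2) *
      Complex.exp (-(δ * t)) * Complex.exp (-(4 * α * t)⁻¹ * ‖η‖ ^ 2) := by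
  rw [ouGaussian, sub_eq_add_neg, Complex.exp_add, mul_assoc]
  push_cast
  ring_nf

lemma re_inv_four_mul_mul (α : ℂ) (t : ℝ) :
    ((4 * α * t)⁻¹).re = α.re / (4 * ‖α‖ ^ 2 * t) := by
  have h : (4 * α * t : ℂ) = ((4 * t : ℝ) : ℂ) * α := by push_cast; ring
  rw [h, Complex.inv_re, Complex.re_ofReal_mul, Complex.normSq_mul, Complex.normSq_ofReal,
    Complex.normSq_eq_norm_sq]
  by_cases ht : t = 0
  · simp [ht]
  by_cases hα : α = 0
  · simp [hα]
  field_simp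

lemma re_inv_four_mul_mul_pos (hα : 0 < α.re) (ht : 0 < t) : 0 < ((4 * α * t)⁻¹).re := by
  have : 0 < ‖α‖ := norm_pos_iff.mpr (fun h => by simp [h] at hα)
  rw [re_inv_four_mul_mul]
  positivity

lemma integrable_ouGaussian (δ : ℂ) (hα : 0 < α.re) (ht : 0 < t) :
    Integrable (ouGaussian d α δ t) := by
  simp_rw [funext (ouGaussian_eq_mul_cexp α δ t)]
  exact (integrable_cexp_neg_mul_sq_norm (re_inv_four_mul_mul_pos hα ht)).const_mul _

lemma integral_norm_ouGaussian (δ : ℂ) (hα : 0 < α.re) (ht : 0 < t) :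
    ∫ η, ‖ouGaussian d α δ t η‖ = (‖α‖ / α.re) ^ ((d : ℝ) / 2) * Real.exp (-δ.re * t) := by
  have hα' : 0 < ‖α‖ := norm_pos_iff.mpr (fun h => by simp [h] at hα)
  have hscale : ‖4 * (Real.pi : ℂ) * α * t‖ = 4 * Real.pi * ‖α‖ * t := by
    simp [abs_of_pos Real.pi_pos, abs_of_pos ht]
  have hexp : (-(d : ℂ) / 2) = ((-(d : ℝ) / 2 : ℝ) : ℂ) := by push_cast; ring
  simp_rw [ouGaussian_eq_mul_cexp, norm_mul, integral_const_mul,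
    integral_norm_cexp_neg_mul_sq_norm (re_inv_four_mul_mul_pos hα ht), hexp,
    Complex.norm_cpow_real, hscale, Complex.norm_exp, re_inv_four_mul_mul,
    finrank_euclideanSpace_fin]
  have hquot : Real.pi / (α.re / (4 * ‖α‖ ^ 2 * t)) / (4 * Real.pi * ‖α‖ * t) = ‖α‖ / α.re := by
    field_simp
  have hpow : (4 * Real.pi * ‖α‖ * t) ^ (-(d : ℝ) / 2) *
      (Real.pi / (α.re / (4 * ‖α‖ ^ 2 * t))) ^ ((d : ℝ) / 2) = (‖α‖ / α.re) ^ ((d : ℝ) / 2) := by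
    rw [neg_div, Real.rpow_neg (by positivity), inv_mul_eq_div,
      ← Real.div_rpow (by positivity) (by positivity), hquot]
  rw [Complex.neg_re, Complex.re_mul_ofReal, ← hpow, neg_mul]
  ring

section KernelEstimates

variable {X : Type*} [MeasurableSpace X] {μ : Measure X} {G w w' : X → ℂ} {B C : ℝ}

lemma norm_integral_mul_le_of_norm_le (hG : Integrable G μ) (hw : ∀ x, ‖w x‖ ≤ C) :
    ‖∫ x, G x * w x ∂μ‖ ≤ (∫ x, ‖G x‖ ∂μ) * C := by
  rw [← integral_mul_const]
  refine norm_integral_le_of_norm_le (hG.norm.mul_const C) (ae_of_all _ fun x => ?_)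
  rw [norm_mul]
  exact mul_le_mul_of_nonneg_left (hw x) (norm_nonneg _)

lemma norm_integral_mul_sub_integral_mul_le (hG : Integrable G μ)
    (hw : AEStronglyMeasurable w μ) (hw' : AEStronglyMeasurable w' μ)
    (hwB : ∀ x, ‖w x‖ ≤ B) (hwB' : ∀ x, ‖w' x‖ ≤ B) (hC : ∀ x, ‖w x - w' x‖ ≤ C) :
    ‖∫ x, G x * w x ∂μ - ∫ x, G x * w' x ∂μ‖ ≤ (∫ x, ‖G x‖ ∂μ) * C := by
  rw [← integral_sub (hG.mul_bdd hw (ae_of_all _ hwB)) (hG.mul_bdd hw' (ae_of_all _ hwB'))]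
  simp_rw [← mul_sub]
  exact norm_integral_mul_le_of_norm_le hG hC

end KernelEstimates

section Semigroup

variable {d : ℕ} {α : ℂ} (δ : ℂ) {S : Matrix (Fin d) (Fin d) ℝ} {t : ℝ}
  {v : EuclideanSpace ℝ (Fin d) → ℂ} {B : ℝ}

lemma ouT_eq_integral_ouGaussian_mul (x : EuclideanSpace ℝ (Fin d)) :
    ouT d α δ S t v x = ∫ η, ouGaussian d α δ t η * v (ouRot d S t x - η) := by
  simp_rw [ouT, ouH_eq_ouGaussian]
  simpa using (integral_sub_left_eq_self
    (fun η => ouGaussian d α δ t η * v (ouRot d S t x - η)) volume (ouRot d S t x))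

lemma ouT_ouRot_eq_integral_ouGaussian_mul (hS : Sᵀ = -S) (τ : ℝ) (x : EuclideanSpace ℝ (Fin d)) :
    ouT d α δ S t v (ouRot d S τ x) =
      ∫ η, ouGaussian d α δ t η * v (ouRot d S τ (ouRot d S t x - η)) := by
  have hrot := (ouRotEquiv hS τ).measurePreserving.integral_comp
    (ouRotEquiv hS τ).toHomeomorph.measurableEmbedding
    (fun η => ouGaussian d α δ t η * v (ouRot d S (t + τ) x - η))
  simp only [coe_ouRotEquiv] at hrot
  rw [ouT_eq_integral_ouGaussian_mul, ouRot_ouRot, ← hrot]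
  congr 1 with η
  rw [← coe_ouRotEquiv hS, ouGaussian_map_linearIsometryEquiv, map_sub, coe_ouRotEquiv,
    ouRot_ouRot, add_comm]

variable (hα : 0 < α.re) (ht : 0 < t)
include hα ht

lemma norm_ouT_le (hB : ∀ y, ‖v y‖ ≤ B) (x : EuclideanSpace ℝ (Fin d)) :
    ‖ouT d α δ S t v x‖ ≤ (∫ η, ‖ouGaussian d α δ t η‖) * B := by
  rw [ouT_eq_integral_ouGaussian_mul]
  exact norm_integral_mul_le_of_norm_le (integrable_ouGaussian δ hα ht) fun η => hB _

lemma uniformContinuous_ouT (hS : Sᵀ = -S) (hB : ∀ y, ‖v y‖ ≤ B) (hv : UniformContinuous v) :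
    UniformContinuous (ouT d α δ S t v) := by
  set K := ∫ η, ‖ouGaussian d α δ t η‖
  have hK : 0 ≤ K := integral_nonneg fun η => norm_nonneg _
  have hshift (y : EuclideanSpace ℝ (Fin d)) : Continuous fun η => v (y - η) :=
    hv.continuous.comp (continuous_const.sub continuous_id)
  rw [Metric.uniformContinuous_iff_le]
  intro ε hε
  obtain ⟨r, hr, hvr⟩ := Metric.uniformContinuous_iff_le.1 hv (ε / (K + 1)) (by positivity)
  refine ⟨r, hr, fun a b hab => ?_⟩
  have hclose (η : EuclideanSpace ℝ (Fin d)) :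
      ‖v (ouRot d S t a - η) - v (ouRot d S t b - η)‖ ≤ ε / (K + 1) := by
    rw [← dist_eq_norm]
    refine hvr (le_of_eq_of_le ?_ hab)
    rw [dist_sub_right, ← coe_ouRotEquiv hS, LinearIsometryEquiv.dist_map]
  calc dist (ouT d α δ S t v a) (ouT d α δ S t v b)
      ≤ K * (ε / (K + 1)) := by
        rw [dist_eq_norm, ouT_eq_integral_ouGaussian_mul, ouT_eq_integral_ouGaussian_mul]
        exact norm_integral_mul_sub_integral_mul_le (integrable_ouGaussian δ hα ht)
          (hshift _).aestronglyMeasurable (hshift _).aestronglyMeasurable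
          (fun η => hB _) (fun η => hB _) hclose
    _ ≤ ε := by
        rw [mul_div_assoc', div_le_iff₀ (by positivity)]
        nlinarith

lemma norm_ouT_ouRot_sub_le (hS : Sᵀ = -S) (hB : ∀ y, ‖v y‖ ≤ B) (hv : Continuous v) (τ : ℝ)
    (x : EuclideanSpace ℝ (Fin d)) :
    ‖ouT d α δ S t v (ouRot d S τ x) - ouT d α δ S t v x‖ ≤
      (∫ η, ‖ouGaussian d α δ t η‖) * ⨆ y, ‖v (ouRot d S τ y) - v y‖ := by
  have hbdd : BddAbove (Set.range fun y => ‖v (ouRot d S τ y) - v y‖) :=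
    ⟨B + B, Set.forall_mem_range.2 fun y => (norm_sub_le _ _).trans (add_le_add (hB _) (hB _))⟩
  have hshift : Continuous fun η => v (ouRot d S t x - η) :=
    hv.comp (continuous_const.sub continuous_id)
  have hrot : Continuous (ouRot d S τ) := (ouRotEquiv hS τ).continuous
  rw [ouT_ouRot_eq_integral_ouGaussian_mul δ hS, ouT_eq_integral_ouGaussian_mul]
  exact norm_integral_mul_sub_integral_mul_le (integrable_ouGaussian δ hα ht)
    (hv.comp (hrot.comp (continuous_const.sub continuous_id))).aestronglyMeasurable
    hshift.aestronglyMeasurable (fun η => hB _) (fun η => hB _)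
    (fun η => le_ciSup hbdd (ouRot d S t x - η))

end Semigroup

theorem ouSemigroup_Cub_Crub_invariance_general
    (d : ℕ) (α δ : ℂ) (hα : 0 < α.re)
    (S : Matrix (Fin d) (Fin d) ℝ) (hS : S.transpose = -S)
    (t : ℝ) (ht : 0 < t)
    (v : EuclideanSpace ℝ (Fin d) → ℂ)
    (hvb : ∃ C : ℝ, ∀ x, ‖v x‖ ≤ C)
    (hvu : UniformContinuous v) :
    (UniformContinuous (ouT d α δ S t v) ∧
      ∃ C' : ℝ, ∀ x, ‖ouT d α δ S t v x‖ ≤ C') ∧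
    (∀ τ : ℝ, ∀ x : EuclideanSpace ℝ (Fin d),
      ‖ouT d α δ S t v (ouRot d S τ x) - ouT d α δ S t v x‖
        ≤ (‖α‖ / α.re) ^ ((d : ℝ) / 2) * Real.exp (-δ.re * t) *
          ⨆ y : EuclideanSpace ℝ (Fin d), ‖v (ouRot d S τ y) - v y‖) ∧
    (Filter.Tendsto
        (fun τ : ℝ => ⨆ x : EuclideanSpace ℝ (Fin d), ‖v (ouRot d S τ x) - v x‖)
        (nhds 0) (nhds 0) →
      Filter.Tendsto
        (fun τ : ℝ => ⨆ x : EuclideanSpace ℝ (Fin d),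
          ‖ouT d α δ S t v (ouRot d S τ x) - ouT d α δ S t v x‖)
        (nhds 0) (nhds 0)) := by
  obtain ⟨B, hB⟩ := hvb
  have hrot (τ : ℝ) (x : EuclideanSpace ℝ (Fin d)) :=
    integral_norm_ouGaussian (d := d) δ hα ht ▸
      norm_ouT_ouRot_sub_le δ hα ht hS hB hvu.continuous τ x
  refine ⟨⟨uniformContinuous_ouT δ hα ht hS hB hvu, _, norm_ouT_le δ hα ht hB⟩, hrot, fun hv => ?_⟩
  refine squeeze_zero (fun τ => Real.iSup_nonneg fun x => norm_nonneg _)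
    (fun τ => ciSup_le (hrot τ)) ?_
  simpa using hv.const_mul ((‖α‖ / α.re) ^ ((d : ℝ) / 2) * Real.exp (-δ.re * t))

/-- invariance of `C_ub` and `C_rub` under the Ornstein--Uhlenbeck semigroup. -/
theorem ouSemigroup_Cub_Crub_invariance
    (d : ℕ) (hd : 1 ≤ d) (α δ : ℂ) (hα : 0 < α.re)
    (S : Matrix (Fin d) (Fin d) ℝ) (hS : S.transpose = -S)
    (t : ℝ) (ht : 0 < t)
    (v : EuclideanSpace ℝ (Fin d) → ℂ)
    (hvb : ∃ C : ℝ, ∀ x, ‖v x‖ ≤ C)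
    (hvu : UniformContinuous v) :
    (UniformContinuous (ouT d α δ S t v) ∧
      ∃ C' : ℝ, ∀ x, ‖ouT d α δ S t v x‖ ≤ C') ∧
    (∀ τ : ℝ, ∀ x : EuclideanSpace ℝ (Fin d),
      ‖ouT d α δ S t v (ouRot d S τ x) - ouT d α δ S t v x‖
        ≤ (‖α‖ / α.re) ^ ((d : ℝ) / 2) * Real.exp (-δ.re * t) *
          ⨆ y : EuclideanSpace ℝ (Fin d), ‖v (ouRot d S τ y) - v y‖) ∧
    (Filter.Tendsto
        (fun τ : ℝ => ⨆ x : EuclideanSpace ℝ (Fin d), ‖v (ouRot d S τ x) - v x‖)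
        (nhds 0) (nhds 0) →
      Filter.Tendsto
        (fun τ : ℝ => ⨆ x : EuclideanSpace ℝ (Fin d),
          ‖ouT d α δ S t v (ouRot d S τ x) - ouT d α δ S t v x‖)
        (nhds 0) (nhds 0)) :=
  ouSemigroup_Cub_Crub_invariance_general d α δ hα S hS t ht v hvb hvu
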